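/- Let y ≥ 1 and 0 ≤ x ≤ y be integers with gcd(x, y) = 1. Then x² ≡ −1 (mod y) if and only if there exist an integer a_0 ≥ 0, an even integer n ≥ 0, and a symmetric (palindromic) sequence (a_1, …, a_n) of positive integers such that x/y = [a_0; a_1, …, a_n]. -/

import Mathlib

/-!
Write `M(a₁, …, aₙ) = ∏ [[aᵢ, 1], [1, 0]] = [[p, r], [q, s]]`. For positive `aᵢ`,
`[0; a₁, …, aₙ] = q / p`, `det M = (-1)ⁿ`, and reversing the sequence transposes `M`.

If the sequence is an even palindrome, `M` is symmetric of determinant `1`, so `ps - q² = 1`.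
Since this also makes `a₀p + q` and `p` coprime, `x / y = (a₀p + q) / p` forces `y = p` and
`x ≡ q`, hence `x² ≡ -1 (mod y)`.

Conversely, for `0 < x < y` Euclid's algorithm expands `y / x` into a positive sequence with
`(p, q) = (y, x)`, and of even length, since the last quotient `c` may be replaced by `c - 1, 1`.
Then `det M = 1` gives `r x ≡ -1 ≡ x² (mod y)`, so `r = x` as `0 ≤ r ≤ y`. The reversed
sequence therefore has the same value, and an expansion of given length is unique, so the
sequence is a palindrome.
-/

/-- `cfTail a m j` is the finite continued fraction `[a_{m-j+1}; a_{m-j+2}, …, a_m]` as a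
rational number, so that `cfTail a m m = [a_1; a_2, …, a_m]` (and `cfTail a m 0 = 0`).
In particular `[0; a_1, …, a_m] = (cfTail a m m)⁻¹`. -/
def cfTail (a : ℕ → ℕ) (m : ℕ) : ℕ → ℚ
  | 0 => 0
  | j + 1 => a (m - j) + (cfTail a m j)⁻¹

open scoped Matrix

-- `cfValue [] = 0`, so `(cfValue l)⁻¹ = [0; l]` holds for the empty list too.
def cfValue : List ℕ → ℚ
  | [] => 0
  | a :: t => a + (cfValue t)⁻¹

def cfMatrix (l : List ℕ) : Matrix (Fin 2) (Fin 2) ℤ :=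
  (l.map fun a => !![(a : ℤ), 1; 1, 0]).prod

@[simp] lemma cfMatrix_nil : cfMatrix [] = 1 := rfl

lemma cfMatrix_cons (a : ℕ) (l : List ℕ) :
    cfMatrix (a :: l) = !![(a : ℤ), 1; 1, 0] * cfMatrix l :=
  List.prod_cons

lemma cfMatrix_append (l l' : List ℕ) : cfMatrix (l ++ l') = cfMatrix l * cfMatrix l' := by
  simp [cfMatrix]

@[simp] lemma cfMatrix_cons_zero_zero (a : ℕ) (l : List ℕ) :
    cfMatrix (a :: l) 0 0 = a * cfMatrix l 0 0 + cfMatrix l 1 0 := by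
  simp [cfMatrix_cons, Matrix.mul_apply]

@[simp] lemma cfMatrix_cons_one_zero (a : ℕ) (l : List ℕ) :
    cfMatrix (a :: l) 1 0 = cfMatrix l 0 0 := by
  simp [cfMatrix_cons, Matrix.mul_apply]

lemma det_cfMatrix (l : List ℕ) : (cfMatrix l).det = (-1) ^ l.length := by
  induction l with
  | nil => simp
  | cons a l ih =>
    rw [cfMatrix_cons, Matrix.det_mul, ih, Matrix.det_fin_two_of, List.length_cons, pow_succ']
    ring

lemma cfMatrix_reverse (l : List ℕ) : cfMatrix l.reverse = (cfMatrix l)ᵀ := by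
  induction l with
  | nil => simp
  | cons a l ih =>
    have hsymm : (!![(a : ℤ), 1; 1, 0])ᵀ = !![(a : ℤ), 1; 1, 0] := by
      ext i j; fin_cases i <;> fin_cases j <;> rfl
    rw [List.reverse_cons, cfMatrix_append, ih, cfMatrix_cons, cfMatrix_cons, cfMatrix_nil,
      mul_one, Matrix.transpose_mul, hsymm]

lemma cfMatrix_col_zero_bounds {l : List ℕ} (hl : ∀ a ∈ l, 0 < a) :
    0 < cfMatrix l 0 0 ∧ 0 ≤ cfMatrix l 1 0 ∧ cfMatrix l 1 0 ≤ cfMatrix l 0 0 := by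
  induction l with
  | nil => simp
  | cons a l ih =>
    obtain ⟨ha, hl⟩ := List.forall_mem_cons.1 hl
    obtain ⟨hp, hq, hqp⟩ := ih hl
    have : cfMatrix l 0 0 ≤ a * cfMatrix l 0 0 :=
      le_mul_of_one_le_left hp.le (by exact_mod_cast ha)
    simp only [cfMatrix_cons_zero_zero, cfMatrix_cons_one_zero]
    exact ⟨by linarith, hp.le, by linarith⟩

lemma inv_cfValue_eq {l : List ℕ} (hl : ∀ a ∈ l, 0 < a) :
    (cfValue l)⁻¹ = (cfMatrix l 1 0 : ℚ) / cfMatrix l 0 0 := by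
  induction l with
  | nil => simp [cfValue]
  | cons a l ih =>
    have hl := (List.forall_mem_cons.1 hl).2
    have hp : (0 : ℚ) < cfMatrix l 0 0 := by
      exact_mod_cast (cfMatrix_col_zero_bounds hl).1
    rw [cfValue, ih hl, cfMatrix_cons_zero_zero, cfMatrix_cons_one_zero]
    push_cast
    field_simp

lemma one_le_cfValue {l : List ℕ} (hl : ∀ a ∈ l, 0 < a) (hne : l ≠ []) :
    1 ≤ cfValue l := by
  obtain ⟨a, t, rfl⟩ := List.exists_cons_of_ne_nil hne
  obtain ⟨ha, ht⟩ := List.forall_mem_cons.1 hl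
  have hinv : 0 ≤ (cfValue t)⁻¹ := by
    rw [inv_cfValue_eq ht]
    obtain ⟨hp, hq, -⟩ := cfMatrix_col_zero_bounds ht
    positivity
  have : (1 : ℚ) ≤ a := by exact_mod_cast ha
  rw [cfValue]
  linarith

lemma eq_of_cfValue_eq {l l' : List ℕ} (hl : ∀ a ∈ l, 0 < a) (hl' : ∀ a ∈ l', 0 < a)
    (hlen : l.length = l'.length) (h : cfValue l = cfValue l') : l = l' := by
  induction l generalizing l' with
  | nil => exact (List.eq_nil_of_length_eq_zero hlen.symm).symm
  | cons a t ih =>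
    obtain ⟨b, t', rfl⟩ := List.exists_cons_of_length_eq_add_one hlen.symm
    have ht := (List.forall_mem_cons.1 hl).2
    have ht' := (List.forall_mem_cons.1 hl').2
    have hlen' : t.length = t'.length := by simpa using hlen
    -- the integer parts agree because both tails contribute a number in `(0, 1]`, or both `0`
    have hab : a = b := by
      rcases eq_or_ne t [] with rfl | hne
      · obtain rfl := List.eq_nil_of_length_eq_zero hlen'.symm
        simpa [cfValue] using h
      have hne' : t' ≠ [] := by rintro rfl; exact hne (List.eq_nil_of_length_eq_zero hlen')
      have h1 := one_le_cfValue ht hne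
      have h1' := one_le_cfValue ht' hne'
      have hr : 0 < (cfValue t)⁻¹ ∧ (cfValue t)⁻¹ ≤ 1 :=
        ⟨by positivity, inv_le_one_of_one_le₀ h1⟩
      have hr' : 0 < (cfValue t')⁻¹ ∧ (cfValue t')⁻¹ ≤ 1 :=
        ⟨by positivity, inv_le_one_of_one_le₀ h1'⟩
      simp only [cfValue] at h
      have hlt : (a : ℚ) < b + 1 := by linarith
      have hgt : (b : ℚ) < a + 1 := by linarith
      norm_cast at hlt hgt
      omega
    subst hab
    simp only [cfValue, add_right_inj, inv_inj] at h
    rw [ih ht ht' hlen' h]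

lemma exists_cfMatrix_col_zero_eq (k : ℕ) {x y : ℕ} (hx : 0 < x) (hxy : x < y)
    (hcop : Nat.Coprime x y) :
    ∃ l : List ℕ, (∀ a ∈ l, 0 < a) ∧ Even (l.length + k) ∧
      cfMatrix l 0 0 = y ∧ cfMatrix l 1 0 = x := by
  induction x using Nat.strong_induction_on generalizing y k with
  | _ x ih =>
  rcases Nat.eq_zero_or_pos (y % x) with hr | hr
  · obtain rfl : x = 1 := Nat.eq_one_of_dvd_coprimes hcop dvd_rfl (Nat.dvd_of_mod_eq_zero hr)
    rcases Nat.even_or_odd k with hk | hk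
    · refine ⟨[y - 1, 1], by simp; omega, by simpa [Nat.even_add] using hk, ?_, by simp⟩
      simp; omega
    · exact ⟨[y], by simp; omega, by simpa [Nat.even_add'] using hk, by simp, by simp⟩
  · have hcop' : Nat.Coprime (y % x) x := by
      rwa [Nat.Coprime, ← Nat.gcd_rec]
    obtain ⟨l, hl, hev, h0, h1⟩ := ih _ (Nat.mod_lt y hx) (k + 1) hr (Nat.mod_lt y hx) hcop'
    refine ⟨y / x :: l, ?_, by rwa [List.length_cons, add_right_comm, add_assoc], ?_,
      by simpa using h0⟩
    · exact List.forall_mem_cons.2 ⟨Nat.div_pos hxy.le hx, hl⟩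
    · rw [cfMatrix_cons_zero_zero, h0, h1]
      exact_mod_cast Nat.div_add_mod' y x

lemma exists_palindrome_of_sq_modEq_neg_one {x y : ℕ} (hx : 0 < x) (hxy : x < y)
    (hcop : Nat.Coprime x y) (hsq : (x : ℤ) ^ 2 ≡ -1 [ZMOD y]) :
    ∃ l : List ℕ, (∀ a ∈ l, 0 < a) ∧ Even l.length ∧ l.reverse = l ∧
      (cfValue l)⁻¹ = (x : ℚ) / y := by
  obtain ⟨l, hl, hev, hp, hq⟩ := exists_cfMatrix_col_zero_eq 0 hx hxy hcop
  rw [add_zero] at hev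
  set r := cfMatrix l 0 1
  have hdet : (y : ℤ) * cfMatrix l 1 1 - r * x = 1 := by
    rw [← hp, ← hq, ← Matrix.det_fin_two, det_cfMatrix, hev.neg_one_pow]
  have hrl : ∀ a ∈ l.reverse, 0 < a := fun a ha => hl a (List.mem_reverse.1 ha)
  have hrev : cfMatrix l.reverse 0 0 = y ∧ cfMatrix l.reverse 1 0 = r := by
    simp [cfMatrix_reverse, hp, r]
  -- `r * x ≡ -1 ≡ x * x`, and `x` is invertible modulo `y`
  have hdvd : (y : ℤ) ∣ r - x := by
    have hcop' : IsCoprime (y : ℤ) x := (Nat.isCoprime_iff_coprime.2 hcop).symm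
    refine hcop'.dvd_of_dvd_mul_right ?_
    have h2 : (y : ℤ) ∣ x ^ 2 + 1 := by simpa using hsq.symm.dvd
    obtain ⟨c, hc⟩ := h2
    exact ⟨cfMatrix l 1 1 - c, by linear_combination -hdet - hc⟩
  have hr : r = x := by
    obtain ⟨-, hr0, hry⟩ := cfMatrix_col_zero_bounds hrl
    simp only [hrev.1, hrev.2] at hr0 hry
    have : |r - x| < y := abs_sub_lt_iff.2 ⟨by omega, by omega⟩
    linarith [Int.eq_zero_of_abs_lt_dvd hdvd this]
  have hval : (cfValue l)⁻¹ = (x : ℚ) / y := by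
    rw [inv_cfValue_eq hl, hp, hq]
    simp only [Int.cast_natCast]
  refine ⟨l, hl, hev, eq_of_cfValue_eq hrl hl l.length_reverse (inv_injective ?_), hval⟩
  rw [hval, inv_cfValue_eq hrl, hrev.1, hrev.2, hr]
  simp only [Int.cast_natCast]

lemma sq_modEq_neg_one_of_div_eq {x y a₀ : ℕ} {p q s : ℤ} (hy : 0 < y)
    (hcop : Nat.Coprime x y) (hp : 0 < p) (hdet : p * s - q * q = 1)
    (h : (x : ℚ) / y = a₀ + (q : ℚ) / p) :
    (x : ℤ) ^ 2 ≡ -1 [ZMOD y] := by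
  have hfrac : ((x : ℤ) : ℚ) / ((y : ℤ) : ℚ) = ((a₀ * p + q : ℤ) : ℚ) / p := by
    rw [Int.cast_natCast, Int.cast_natCast, h]
    push_cast
    field_simp
  have hcop' : IsCoprime (a₀ * p + q) p := ⟨-q, s + a₀ * q, by linear_combination hdet⟩
  obtain ⟨hx, hy⟩ := Rat.div_int_inj (a := x) (b := y) (by exact_mod_cast hy) hp
    (by simpa using hcop) (Int.isCoprime_iff_nat_coprime.1 hcop') hfrac
  refine (Int.modEq_iff_dvd.2 ⟨a₀ ^ 2 * p + 2 * a₀ * q + s, ?_⟩).symm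
  rw [hx, hy]
  linear_combination -hdet

lemma sq_modEq_neg_one_of_palindrome {x y a₀ : ℕ} {l : List ℕ} (hy : 0 < y)
    (hcop : Nat.Coprime x y) (hl : ∀ a ∈ l, 0 < a) (hev : Even l.length)
    (hpal : l.reverse = l) (h : (x : ℚ) / y = a₀ + (cfValue l)⁻¹) :
    (x : ℤ) ^ 2 ≡ -1 [ZMOD y] := by
  have hsymm : cfMatrix l 0 1 = cfMatrix l 1 0 := by
    simpa [cfMatrix_reverse] using congrFun (congrFun (congrArg cfMatrix hpal) 1) 0
  have hdet := det_cfMatrix l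
  rw [Matrix.det_fin_two, hev.neg_one_pow, hsymm] at hdet
  rw [inv_cfValue_eq hl] at h
  exact sq_modEq_neg_one_of_div_eq hy hcop (cfMatrix_col_zero_bounds hl).1 hdet h

theorem sq_modEq_neg_one_iff_exists_palindrome {x y : ℕ} (hy : 1 ≤ y) (hxy : x ≤ y)
    (hcop : Nat.Coprime x y) :
    (x : ℤ) ^ 2 ≡ -1 [ZMOD y] ↔
      ∃ (a₀ : ℕ) (l : List ℕ), (∀ a ∈ l, 0 < a) ∧ Even l.length ∧ l.reverse = l ∧
        (x : ℚ) / y = a₀ + (cfValue l)⁻¹ := by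
  refine ⟨fun hsq => ?_, fun ⟨a₀, l, hl, hev, hpal, h⟩ =>
    sq_modEq_neg_one_of_palindrome hy hcop hl hev hpal h⟩
  rcases hy.eq_or_lt with rfl | hy
  · exact ⟨x, [], by simp, by simp, rfl, by simp [cfValue]⟩
  have hx : 0 < x := Nat.pos_of_ne_zero (by rintro rfl; simp at hcop; omega)
  have hxy : x < y := hxy.lt_of_ne (by rintro rfl; simp at hcop; omega)
  obtain ⟨l, hl, hev, hpal, h⟩ := exists_palindrome_of_sq_modEq_neg_one hx hxy hcop hsq
  exact ⟨0, l, hl, hev, hpal, by simp [h]⟩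

lemma cfTail_eq_cfValue (a : ℕ → ℕ) {m j : ℕ} (hj : j ≤ m) :
    cfTail a m j = cfValue ((List.range' (m - j + 1) j).map a) := by
  induction j with
  | zero => rfl
  | succ j ih =>
    rw [cfTail, ih (by omega), show m - (j + 1) + 1 = m - j by omega, List.range'_succ,
      List.map_cons, cfValue]

lemma map_range'_getD (l : List ℕ) :
    (List.range' 1 l.length).map (fun i => l.getD (i - 1) 0) = l := by
  refine List.ext_getElem (by simp) fun i _ hi => ?_
  simp [List.getD_eq_getElem?_getD, List.getElem?_eq_getElem hi]

lemma reverse_map_range'_eq_iff (a : ℕ → ℕ) (n : ℕ) :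
    ((List.range' 1 n).map a).reverse = (List.range' 1 n).map a ↔
      ∀ i, 1 ≤ i → i ≤ n → a (n + 1 - i) = a i := by
  rw [List.ext_getElem_iff]
  simp only [List.length_reverse, List.getElem_reverse, List.getElem_map, List.getElem_range',
    List.length_map, List.length_range', true_and]
  refine ⟨fun h i hi1 hin => ?_, fun h i hi _ => ?_⟩
  · simpa [show n - 1 - (i - 1) = n - i by omega, show 1 + (i - 1) = i by omega,
      show 1 + (n - i) = n + 1 - i by omega] using h (i - 1) (by omega) (by omega)
  · simpa [show n + 1 - (i + 1) = 1 + (n - 1 - i) by omega, add_comm]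
      using h (i + 1) (by omega) hi

lemma forall_mem_map_range'_pos_iff (a : ℕ → ℕ) (n : ℕ) :
    (∀ b ∈ (List.range' 1 n).map a, 0 < b) ↔ ∀ i, 1 ≤ i → i ≤ n → 0 < a i := by
  simp only [List.forall_mem_map, List.mem_range'_1]
  exact ⟨fun h i h1 h2 => h i ⟨h1, by omega⟩, fun h i hi => h i hi.1 (by omega)⟩

/-- for integers `y ≥ 1`, `0 ≤ x ≤ y` with `gcd(x,y) = 1`: `x² ≡ -1 (mod y)` iff
there exist `a_0 ≥ 0`, an even `n ≥ 0` and a symmetric sequence `(a_1, …, a_n)` of positive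
integers such that `x/y = [a_0; a_1, …, a_n]`. -/
theorem stmt_14 (x y : ℕ) (hy : 1 ≤ y) (hxy : x ≤ y) (hcop : Nat.Coprime x y) :
    Int.ModEq (y : ℤ) ((x : ℤ) ^ 2) (-1) ↔
      ∃ (a0 : ℕ) (n : ℕ) (a : ℕ → ℕ), Even n ∧
        (∀ i, 1 ≤ i → i ≤ n → 0 < a i) ∧
        (∀ i, 1 ≤ i → i ≤ n → a (n + 1 - i) = a i) ∧
        (x : ℚ) / y = (a0 : ℚ) + (cfTail a n n)⁻¹ := by
  rw [sq_modEq_neg_one_iff_exists_palindrome hy hxy hcop]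
  constructor
  · rintro ⟨a₀, l, hl, hev, hpal, h⟩
    have hla := map_range'_getD l
    rw [← hla] at hl hpal
    refine ⟨a₀, l.length, _, hev, (forall_mem_map_range'_pos_iff _ _).1 hl,
      (reverse_map_range'_eq_iff _ _).1 hpal, ?_⟩
    rwa [cfTail_eq_cfValue _ le_rfl, Nat.sub_self, hla]
  · rintro ⟨a₀, n, a, hev, hpos, hsym, h⟩
    refine ⟨a₀, (List.range' 1 n).map a, (forall_mem_map_range'_pos_iff a n).2 hpos,
      by simpa using hev, (reverse_map_range'_eq_iff a n).2 hsym, ?_⟩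
    rwa [cfTail_eq_cfValue _ le_rfl, Nat.sub_self] at h
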